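/- Let h(x) = 1/(24x²) + 1/(48x³) + 1/(160x⁴) + 1/(960x⁵) and s(x) = (x+1)ln(1 - 1/(2x+2)) - x·ln(1 - 1/(2x)) - (1/2)ln(1 + 1/x) - ln((2x+1)/(2x+2)) + h(x+1) - h(x). Then s''(x) > 0 for all x > 1, i.e., s is strictly convex on (1, ∞). -/

import Mathlib

open Real

noncomputable def h (x : ℝ) : ℝ :=
  1 / (24 * x ^ 2) + 1 / (48 * x ^ 3) + 1 / (160 * x ^ 4) + 1 / (960 * x ^ 5)

noncomputable def s (x : ℝ) : ℝ :=
  (x + 1) * Real.log (1 - 1 / (2 * x + 2)) - x * Real.log (1 - 1 / (2 * x))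
    - (1 / 2) * Real.log (1 + 1 / x) - Real.log ((2 * x + 1) / (2 * x + 2))
    + h (x + 1) - h x

/-- first derivative of s -/
noncomputable def s1 (x : ℝ) : ℝ :=
  (Real.log (2 * x + 1) - Real.log (2 * x + 2) + 1 / (2 * x + 1))
    - (Real.log (2 * x - 1) - Real.log (2 * x) + 1 / (2 * x - 1))
    - (1 / 2) * (1 / (x + 1) - 1 / x)
    - (2 / (2 * x + 1) - 2 / (2 * x + 2))
    + (-(1 / (12 * (x + 1) ^ 3)) - 1 / (16 * (x + 1) ^ 4) - 1 / (40 * (x + 1) ^ 5)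
        - 1 / (192 * (x + 1) ^ 6))
    - (-(1 / (12 * x ^ 3)) - 1 / (16 * x ^ 4) - 1 / (40 * x ^ 5) - 1 / (192 * x ^ 6))

/-- second derivative of s -/
noncomputable def s2 (x : ℝ) : ℝ :=
  (192 * x ^ 9 + 912 * x ^ 8 + 1712 * x ^ 7 + 1549 * x ^ 6 + 663 * x ^ 5 + 41 * x ^ 4
      - 95 * x ^ 3 - 49 * x ^ 2 - 11 * x - 1)
    / (32 * (x ^ 7 * (x + 1) ^ 7 * (2 * x - 1) ^ 2 * (2 * x + 1) ^ 2))

lemma hasDerivAt_one_div {f : ℝ → ℝ} {f' x : ℝ} (hf : HasDerivAt f f' x) (hne : f x ≠ 0) :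
    HasDerivAt (fun z => 1 / f z) (-f' / f x ^ 2) x := by
  have := (hasDerivAt_const x (1 : ℝ)).div hf hne
  simp only [zero_mul, one_mul, zero_sub] at this
  exact this

lemma hasDerivAt_lin (a b x : ℝ) : HasDerivAt (fun z : ℝ => a * z + b) a x := by
  simpa using ((hasDerivAt_id x).const_mul a).add_const b

set_option maxHeartbeats 1600000 in
lemma hasDerivAt_s (x : ℝ) (hx : 1 < x) : HasDerivAt s (s1 x) x := by
  have hx0 : (0:ℝ) < x := by linarith
  have hx1 : (0:ℝ) < x + 1 := by linarith
  have h2m : (0:ℝ) < 2 * x - 1 := by linarith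
  have h2p : (0:ℝ) < 2 * x + 1 := by linarith
  have h2q : (0:ℝ) < 2 * x + 2 := by linarith
  have hx0' : x ≠ 0 := ne_of_gt hx0
  have hx1' : x + 1 ≠ 0 := ne_of_gt hx1
  have h2m' : 2 * x - 1 ≠ 0 := ne_of_gt h2m
  have h2p' : 2 * x + 1 ≠ 0 := ne_of_gt h2p
  have h2q' : 2 * x + 2 ≠ 0 := ne_of_gt h2q
  -- inner functions
  have d1 : HasDerivAt (fun z : ℝ => 1 - 1 / (2 * z + 2))
      (0 - (-(2) / (2 * x + 2) ^ 2)) x :=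
    (hasDerivAt_const x (1:ℝ)).sub (hasDerivAt_one_div (hasDerivAt_lin 2 2 x) h2q')
  have d2 : HasDerivAt (fun z : ℝ => 1 - 1 / (2 * z))
      (0 - (-(2) / (2 * x) ^ 2)) x := by
    have := (hasDerivAt_const x (1:ℝ)).sub
      (hasDerivAt_one_div (hasDerivAt_lin 2 0 x)
        (by simpa using ne_of_gt (by linarith : (0:ℝ) < 2 * x + 0)))
    simp only [add_zero] at this
    exact this
  have d3 : HasDerivAt (fun z : ℝ => 1 + 1 / z)
      (0 + (-(1) / x ^ 2)) x := by
    have h1 : HasDerivAt (fun z : ℝ => 1 / z) (-(1) / x ^ 2) x := by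
      simpa using hasDerivAt_one_div (hasDerivAt_id x) hx0'
    exact (hasDerivAt_const x (1:ℝ)).add h1
  have d4 : HasDerivAt (fun z : ℝ => (2 * z + 1) / (2 * z + 2))
      ((2 * (2 * x + 2) - (2 * x + 1) * 2) / (2 * x + 2) ^ 2) x :=
    (hasDerivAt_lin 2 1 x).div (hasDerivAt_lin 2 2 x) h2q'
  -- values of inner functions nonzero
  have w1 : (1 : ℝ) - 1 / (2 * x + 2) = (2 * x + 1) / (2 * x + 2) := by field_simp; ring
  have w2 : (1 : ℝ) - 1 / (2 * x) = (2 * x - 1) / (2 * x) := by field_simp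
  have w3 : (1 : ℝ) + 1 / x = (x + 1) / x := by field_simp
  have v1 : 1 - 1 / (2 * x + 2) ≠ 0 := by rw [w1]; positivity
  have v2 : 1 - 1 / (2 * x) ≠ 0 := by rw [w2]; positivity
  have v3 : 1 + 1 / x ≠ 0 := by positivity
  have v4 : (2 * x + 1) / (2 * x + 2) ≠ 0 := by positivity
  -- the h-parts
  have dh : ∀ y : ℝ, y ≠ 0 → HasDerivAt h
      (-(24 * (2 * y)) / (24 * y ^ 2) ^ 2 + -(48 * (3 * y ^ 2)) / (48 * y ^ 3) ^ 2
        + -(160 * (4 * y ^ 3)) / (160 * y ^ 4) ^ 2 + -(960 * (5 * y ^ 4)) / (960 * y ^ 5) ^ 2) y := by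
    intro y hy
    have p2 : HasDerivAt (fun z : ℝ => 24 * z ^ 2) (24 * (2 * y)) y := by
      simpa using ((hasDerivAt_pow 2 y).const_mul 24)
    have p3 : HasDerivAt (fun z : ℝ => 48 * z ^ 3) (48 * (3 * y ^ 2)) y := by
      simpa using ((hasDerivAt_pow 3 y).const_mul 48)
    have p4 : HasDerivAt (fun z : ℝ => 160 * z ^ 4) (160 * (4 * y ^ 3)) y := by
      simpa using ((hasDerivAt_pow 4 y).const_mul 160)
    have p5 : HasDerivAt (fun z : ℝ => 960 * z ^ 5) (960 * (5 * y ^ 4)) y := by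
      simpa using ((hasDerivAt_pow 5 y).const_mul 960)
    exact ((((hasDerivAt_one_div p2 (by positivity)).add
      (hasDerivAt_one_div p3 (by positivity))).add
      (hasDerivAt_one_div p4 (by positivity))).add
      (hasDerivAt_one_div p5 (by positivity)))
  have dh1 : HasDerivAt (fun z : ℝ => h (z + 1))
      ((-(24 * (2 * (x+1))) / (24 * (x+1) ^ 2) ^ 2 + -(48 * (3 * (x+1) ^ 2)) / (48 * (x+1) ^ 3) ^ 2
        + -(160 * (4 * (x+1) ^ 3)) / (160 * (x+1) ^ 4) ^ 2
        + -(960 * (5 * (x+1) ^ 4)) / (960 * (x+1) ^ 5) ^ 2) * 1) x :=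
    by have := (dh (x + 1) hx1').comp x ((hasDerivAt_id x).add_const 1); exact this
  have dh0 := dh x hx0'
  -- assemble
  have big := (((((((hasDerivAt_id x).add_const 1).mul (d1.log v1)).sub
      ((hasDerivAt_id x).mul (d2.log v2))).sub
      ((d3.log v3).const_mul (1/2 : ℝ))).sub (d4.log v4)).add dh1).sub dh0
  refine big.congr_deriv ?_
  symm
  have e1 : Real.log (1 - 1 / (2 * x + 2)) = Real.log (2 * x + 1) - Real.log (2 * x + 2) := by
    rw [w1, Real.log_div h2p' h2q']
  have e2 : Real.log (1 - 1 / (2 * x)) = Real.log (2 * x - 1) - Real.log (2 * x) := by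
    rw [w2, Real.log_div h2m' (by positivity)]
  -- small rational simplifications
  have r1 : (x + 1) * ((0 - -2 / (2 * x + 2) ^ 2) / (1 - 1 / (2 * x + 2))) = 1 / (2 * x + 1) := by
    rw [w1]; field_simp; ring_nf; try tauto
  have r2 : x * ((0 - -2 / (2 * x) ^ 2) / (1 - 1 / (2 * x))) = 1 / (2 * x - 1) := by
    rw [w2]; field_simp; ring_nf; try tauto
  have r3 : (0 + -1 / x ^ 2) / (1 + 1 / x) = 1 / (x + 1) - 1 / x := by
    rw [w3]; field_simp; ring_nf; try tauto
  have r4 : (2 * (2 * x + 2) - (2 * x + 1) * 2) / (2 * x + 2) ^ 2 / ((2 * x + 1) / (2 * x + 2))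
      = 2 / (2 * x + 1) - 2 / (2 * x + 2) := by
    field_simp
  have r5 : -(24 * (2 * (x+1))) / (24 * (x+1) ^ 2) ^ 2 + -(48 * (3 * (x+1) ^ 2)) / (48 * (x+1) ^ 3) ^ 2
        + -(160 * (4 * (x+1) ^ 3)) / (160 * (x+1) ^ 4) ^ 2
        + -(960 * (5 * (x+1) ^ 4)) / (960 * (x+1) ^ 5) ^ 2
      = -(1 / (12 * (x + 1) ^ 3)) - 1 / (16 * (x + 1) ^ 4) - 1 / (40 * (x + 1) ^ 5)
        - 1 / (192 * (x + 1) ^ 6) := by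
    field_simp; ring_nf; try tauto
  have r6 : -(24 * (2 * x)) / (24 * x ^ 2) ^ 2 + -(48 * (3 * x ^ 2)) / (48 * x ^ 3) ^ 2
        + -(160 * (4 * x ^ 3)) / (160 * x ^ 4) ^ 2 + -(960 * (5 * x ^ 4)) / (960 * x ^ 5) ^ 2
      = -(1 / (12 * x ^ 3)) - 1 / (16 * x ^ 4) - 1 / (40 * x ^ 5) - 1 / (192 * x ^ 6) := by
    field_simp; ring_nf; try tauto
  simp only [s1, e1, e2, id_eq]
  linear_combination -r1 + r2 + (1/2 : ℝ) * r3 + r4 - r5 + r6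

set_option maxHeartbeats 1600000 in
lemma hasDerivAt_s1 (x : ℝ) (hx : 1 < x) : HasDerivAt s1 (s2 x) x := by
  have hx0 : (0:ℝ) < x := by linarith
  have hx1 : (0:ℝ) < x + 1 := by linarith
  have h2m : (0:ℝ) < 2 * x - 1 := by linarith
  have h2p : (0:ℝ) < 2 * x + 1 := by linarith
  have h2q : (0:ℝ) < 2 * x + 2 := by linarith
  have hx0' : x ≠ 0 := ne_of_gt hx0
  have hx1' : x + 1 ≠ 0 := ne_of_gt hx1
  have h2m' : 2 * x - 1 ≠ 0 := ne_of_gt h2m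
  have h2p' : 2 * x + 1 ≠ 0 := ne_of_gt h2p
  have h2q' : 2 * x + 2 ≠ 0 := ne_of_gt h2q
  have lp : HasDerivAt (fun z : ℝ => Real.log (2 * z + 1)) (2 / (2 * x + 1)) x :=
    (hasDerivAt_lin 2 1 x).log h2p'
  have lq : HasDerivAt (fun z : ℝ => Real.log (2 * z + 2)) (2 / (2 * x + 2)) x :=
    (hasDerivAt_lin 2 2 x).log h2q'
  have lm : HasDerivAt (fun z : ℝ => Real.log (2 * z - 1)) (2 / (2 * x - 1)) x := by
    have := (hasDerivAt_lin 2 (-1) x).log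
      (by rw [show 2 * x + (-1) = 2 * x - 1 by ring]; exact h2m')
    simpa [sub_eq_add_neg] using this
  have l0 : HasDerivAt (fun z : ℝ => Real.log (2 * z)) (2 / (2 * x)) x := by
    have := (hasDerivAt_lin 2 0 x).log
      (by simpa using ne_of_gt (by linarith : (0:ℝ) < 2 * x + 0))
    simpa [add_zero] using this
  have ip : HasDerivAt (fun z : ℝ => 1 / (2 * z + 1)) (-(2) / (2 * x + 1) ^ 2) x :=
    hasDerivAt_one_div (hasDerivAt_lin 2 1 x) h2p'
  have iq : HasDerivAt (fun z : ℝ => 2 / (2 * z + 1) - 2 / (2 * z + 2))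
      ((-(2) / (2 * x + 1) ^ 2) * 2 - (-(2) / (2 * x + 2) ^ 2) * 2) x := by
    have a1 : HasDerivAt (fun z : ℝ => 2 / (2 * z + 1)) ((-(2) / (2 * x + 1) ^ 2) * 2) x := by
      simpa [mul_comm, mul_one_div, div_mul_eq_mul_div, mul_div_assoc, div_eq_mul_inv] using
        (ip.const_mul (2 : ℝ))
    have a2 : HasDerivAt (fun z : ℝ => 2 / (2 * z + 2)) ((-(2) / (2 * x + 2) ^ 2) * 2) x := by
      have hh := hasDerivAt_one_div (hasDerivAt_lin 2 2 x) h2q'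
      simpa [mul_comm, mul_one_div, div_mul_eq_mul_div, mul_div_assoc, div_eq_mul_inv] using
        (hh.const_mul (2 : ℝ))
    exact a1.sub a2
  have im : HasDerivAt (fun z : ℝ => 1 / (2 * z - 1)) (-(2) / (2 * x - 1) ^ 2) x := by
    have := hasDerivAt_one_div (hasDerivAt_lin 2 (-1) x)
      (by rw [show 2 * x + (-1) = 2 * x - 1 by ring]; exact h2m')
    simpa [sub_eq_add_neg] using this
  have ic : HasDerivAt (fun z : ℝ => 1 / (z + 1) - 1 / z)
      (-(1) / (x + 1) ^ 2 - -(1) / x ^ 2) x := by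
    have a1 : HasDerivAt (fun z : ℝ => 1 / (z + 1)) (-(1) / (x + 1) ^ 2) x := by
      simpa using hasDerivAt_one_div ((hasDerivAt_id x).add_const 1) hx1'
    have a2 : HasDerivAt (fun z : ℝ => 1 / z) (-(1) / x ^ 2) x := by
      simpa using hasDerivAt_one_div (hasDerivAt_id x) hx0'
    exact a1.sub a2
  -- derivative of the h'-part
  have dhp : ∀ y : ℝ, y ≠ 0 → HasDerivAt
      (fun z : ℝ => -(1 / (12 * z ^ 3)) - 1 / (16 * z ^ 4) - 1 / (40 * z ^ 5) - 1 / (192 * z ^ 6))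
      (-(-(12 * (3 * y ^ 2)) / (12 * y ^ 3) ^ 2) - -(16 * (4 * y ^ 3)) / (16 * y ^ 4) ^ 2
        - -(40 * (5 * y ^ 4)) / (40 * y ^ 5) ^ 2 - -(192 * (6 * y ^ 5)) / (192 * y ^ 6) ^ 2) y := by
    intro y hy
    have p3 : HasDerivAt (fun z : ℝ => 12 * z ^ 3) (12 * (3 * y ^ 2)) y := by
      simpa using ((hasDerivAt_pow 3 y).const_mul 12)
    have p4 : HasDerivAt (fun z : ℝ => 16 * z ^ 4) (16 * (4 * y ^ 3)) y := by
      simpa using ((hasDerivAt_pow 4 y).const_mul 16)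
    have p5 : HasDerivAt (fun z : ℝ => 40 * z ^ 5) (40 * (5 * y ^ 4)) y := by
      simpa using ((hasDerivAt_pow 5 y).const_mul 40)
    have p6 : HasDerivAt (fun z : ℝ => 192 * z ^ 6) (192 * (6 * y ^ 5)) y := by
      simpa using ((hasDerivAt_pow 6 y).const_mul 192)
    exact (((hasDerivAt_one_div p3 (by positivity)).neg.sub
      (hasDerivAt_one_div p4 (by positivity))).sub
      (hasDerivAt_one_div p5 (by positivity))).sub
      (hasDerivAt_one_div p6 (by positivity))
  have dhp1 : HasDerivAt
      (fun z : ℝ => -(1 / (12 * (z + 1) ^ 3)) - 1 / (16 * (z + 1) ^ 4) - 1 / (40 * (z + 1) ^ 5)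
        - 1 / (192 * (z + 1) ^ 6))
      ((-(-(12 * (3 * (x+1) ^ 2)) / (12 * (x+1) ^ 3) ^ 2) - -(16 * (4 * (x+1) ^ 3)) / (16 * (x+1) ^ 4) ^ 2
        - -(40 * (5 * (x+1) ^ 4)) / (40 * (x+1) ^ 5) ^ 2
        - -(192 * (6 * (x+1) ^ 5)) / (192 * (x+1) ^ 6) ^ 2) * 1) x :=
    by have := (dhp (x + 1) hx1').comp x ((hasDerivAt_id x).add_const 1); exact this
  have dhp0 := dhp x hx0'
  have big := ((((((lp.sub lq).add ip).sub ((lm.sub l0).add im)).sub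
      (ic.const_mul (1/2 : ℝ))).sub iq).add dhp1).sub dhp0
  refine big.congr_deriv ?_
  symm
  have q1 : -(-(12 * (3 * (x+1) ^ 2)) / (12 * (x+1) ^ 3) ^ 2) - -(16 * (4 * (x+1) ^ 3)) / (16 * (x+1) ^ 4) ^ 2
        - -(40 * (5 * (x+1) ^ 4)) / (40 * (x+1) ^ 5) ^ 2
        - -(192 * (6 * (x+1) ^ 5)) / (192 * (x+1) ^ 6) ^ 2
      = 1 / (4 * (x+1) ^ 4) + 1 / (4 * (x+1) ^ 5) + 1 / (8 * (x+1) ^ 6) + 1 / (32 * (x+1) ^ 7) := by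
    field_simp; ring_nf; try tauto
  have q0 : -(-(12 * (3 * x ^ 2)) / (12 * x ^ 3) ^ 2) - -(16 * (4 * x ^ 3)) / (16 * x ^ 4) ^ 2
        - -(40 * (5 * x ^ 4)) / (40 * x ^ 5) ^ 2 - -(192 * (6 * x ^ 5)) / (192 * x ^ 6) ^ 2
      = 1 / (4 * x ^ 4) + 1 / (4 * x ^ 5) + 1 / (8 * x ^ 6) + 1 / (32 * x ^ 7) := by
    field_simp; ring_nf; try tauto
  have main : s2 x
      = (2 / (2 * x + 1) - 2 / (2 * x + 2) + -2 / (2 * x + 1) ^ 2)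
        - (2 / (2 * x - 1) - 2 / (2 * x) + -2 / (2 * x - 1) ^ 2)
        - 1 / 2 * (-1 / (x + 1) ^ 2 - -1 / x ^ 2)
        - (-2 / (2 * x + 1) ^ 2 * 2 - -2 / (2 * x + 2) ^ 2 * 2)
        + ((1 / (4 * (x+1) ^ 4) + 1 / (4 * (x+1) ^ 5) + 1 / (8 * (x+1) ^ 6) + 1 / (32 * (x+1) ^ 7))
           - (1 / (4 * x ^ 4) + 1 / (4 * x ^ 5) + 1 / (8 * x ^ 6) + 1 / (32 * x ^ 7))) := by
    simp only [s2]
    rw [eq_comm]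
    field_simp
    ring
  rw [q1, q0]
  linear_combination main

theorem s_convex (x : ℝ) (hx : 1 < x) : 0 < deriv (deriv s) x := by
  have hev : deriv s =ᶠ[nhds x] s1 := by
    filter_upwards [isOpen_Ioi.mem_nhds (show x ∈ Set.Ioi (1:ℝ) from hx)] with y hy
    exact (hasDerivAt_s y hy).deriv
  have h2 : deriv (deriv s) x = s2 x := by
    rw [Filter.EventuallyEq.deriv_eq hev]
    exact (hasDerivAt_s1 x hx).deriv
  rw [h2]
  have ht : (0:ℝ) < x - 1 := by linarith
  have hN : (0:ℝ) < 192 * x ^ 9 + 912 * x ^ 8 + 1712 * x ^ 7 + 1549 * x ^ 6 + 663 * x ^ 5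
      + 41 * x ^ 4 - 95 * x ^ 3 - 49 * x ^ 2 - 11 * x - 1 := by
    nlinarith [pow_pos ht 9, pow_pos ht 8, pow_pos ht 7, pow_pos ht 6, pow_pos ht 5,
      pow_pos ht 4, pow_pos ht 3, pow_pos ht 2, ht]
  have hD : (0:ℝ) < 32 * (x ^ 7 * (x + 1) ^ 7 * (2 * x - 1) ^ 2 * (2 * x + 1) ^ 2) := by
    have h1 : (0:ℝ) < 2 * x - 1 := by linarith
    have h2 : (0:ℝ) < 2 * x + 1 := by linarith
    have h3 : (0:ℝ) < x + 1 := by linarith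
    have h0 : (0:ℝ) < x := by linarith
    positivity
  exact div_pos hN hD
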